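/- If a Mealy automaton A = (Q, Σ, δ, ρ) is reversible and no connected component of A is coreversible, then for every n ≥ 1 every connected component of the power A^n, viewed as a Mealy automaton, is reversible and non-coreversible; if moreover A is invertible, then these connected components are also invertible. -/

import Mathlib

/-!
Mealy automata: common definitions.

A Mealy automaton on stateset `Q` and alphabet `Γ` is given by transition
functions `δ : Γ → Q → Q` (for each input letter) and output functions
`ρ : Q → Γ → Γ` (for each state); it has a transition `x —i|j→ y` exactly
when `δ i x = y` and `ρ x i = j`.
-/

/-- Extended output function `ρ_x : Γ* → Γ*` of a single state. -/
def rhoStar {Q Γ : Type*} (δ : Γ → Q → Q) (ρ : Q → Γ → Γ) : Q → List Γ → List Γ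
  | _, [] => []
  | x, i :: s => ρ x i :: rhoStar δ ρ (δ i x) s

/-- `ρ_u : Γ* → Γ*` for a word `u = x₁⋯x_n` of states: `ρ_u = ρ_{x_n} ∘ ⋯ ∘ ρ_{x₁}`. -/
def rhoWord {Q Γ : Type*} (δ : Γ → Q → Q) (ρ : Q → Γ → Γ) : List Q → List Γ → List Γ
  | [], s => s
  | x :: u, s => rhoWord δ ρ u (rhoStar δ ρ x s)

/-- `ρ_u : Γ → Γ` on single letters (the output function of the power automaton). -/
def rhoLetter {Q Γ : Type*} (ρ : Q → Γ → Γ) : List Q → Γ → Γ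
  | [], i => i
  | x :: u, i => rhoLetter ρ u (ρ x i)

/-- Extended transition function `δ_i : Q* → Q*` (the transition function of powers). -/
def deltaStar {Q Γ : Type*} (δ : Γ → Q → Q) (ρ : Q → Γ → Γ) : Γ → List Q → List Q
  | _, [] => []
  | i, x :: u => δ i x :: deltaStar δ ρ (ρ x i) u

/-- Sequential application `δ_s = δ_{s_n} ∘ ⋯ ∘ δ_{s₁}` of the letters of a word `s`. -/
def applyWord {S Γ : Type*} (d : Γ → S → S) : List Γ → S → S
  | [], x => x
  | i :: s, x => applyWord d s (d i x)

/-- The orbit `{δ_s(x) : s ∈ Γ*}` of a state: for reversible automata this is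
exactly the (strongly) connected component of `x`. -/
def orbitOf {S Γ : Type*} (d : Γ → S → S) (x : S) : Set S :=
  {y | ∃ s : List Γ, applyWord d s x = y}

/-- An automaton is invertible when every output function is a permutation. -/
def MInvertible {Q Γ : Type*} (ρ : Q → Γ → Γ) : Prop := ∀ x, Function.Bijective (ρ x)

/-- An automaton is reversible when every transition function is a permutation. -/
def MReversible {Q Γ : Type*} (δ : Γ → Q → Q) : Prop := ∀ i, Function.Bijective (δ i)

/-- Coreversibility: `δ_i(y) = δ_{i'}(z)` and `ρ_y(i) = ρ_z(i')` imply `y = z`. -/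
def MCoreversible {Q Γ : Type*} (δ : Γ → Q → Q) (ρ : Q → Γ → Γ) : Prop :=
  ∀ y z : Q, ∀ i i' : Γ, δ i y = δ i' z → ρ y i = ρ z i' → y = z

/-- Bireversible: invertible, reversible and coreversible. -/
def MBireversible {Q Γ : Type*} (δ : Γ → Q → Q) (ρ : Q → Γ → Γ) : Prop :=
  MInvertible ρ ∧ MReversible δ ∧ MCoreversible δ ρ

/-- Connectedness: every state is reachable from every state. -/
def MConnected {Q Γ : Type*} (δ : Γ → Q → Q) : Prop :=
  ∀ x y : Q, ∃ s : List Γ, applyWord δ s x = y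

/-- Invertibility of a component `C` (as an automaton with stateset `C`). -/
def CompInvertible {S Γ : Type*} (r : S → Γ → Γ) (C : Set S) : Prop :=
  ∀ x ∈ C, Function.Bijective (r x)

/-- Reversibility of a component `C`: each transition function permutes `C`. -/
def CompReversible {S Γ : Type*} (d : Γ → S → S) (C : Set S) : Prop :=
  ∀ i : Γ, Set.BijOn (d i) C C

/-- Coreversibility of a component `C` (as an automaton with stateset `C`). -/
def CompCoreversible {S Γ : Type*} (d : Γ → S → S) (r : S → Γ → Γ) (C : Set S) : Prop :=
  ∀ y ∈ C, ∀ z ∈ C, ∀ i i' : Γ, d i y = d i' z → r y i = r z i' → y = z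

/-- Bireversibility of a component `C` (as an automaton with stateset `C`). -/
def CompBireversible {S Γ : Type*} (d : Γ → S → S) (r : S → Γ → Γ) (C : Set S) : Prop :=
  CompInvertible r C ∧ CompReversible d C ∧ CompCoreversible d r C

/-- Transition functions of the product `A × B` of two Mealy automata. -/
def prodD {Q Q' Γ : Type*} (δ : Γ → Q → Q) (ρ : Q → Γ → Γ) (δ' : Γ → Q' → Q') :
    Γ → Q × Q' → Q × Q' :=
  fun i p => (δ i p.1, δ' (ρ p.1 i) p.2)

/-- Output functions of the product `A × B` of two Mealy automata. -/
def prodR {Q Q' Γ : Type*} (ρ : Q → Γ → Γ) (ρ' : Q' → Γ → Γ) : Q × Q' → Γ → Γ :=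
  fun p i => ρ' p.2 (ρ p.1 i)

/-- `u^n`: the `n`-fold concatenation of a word with itself. -/
def wordPow {Q : Type*} (u : List Q) : ℕ → List Q
  | 0 => []
  | n + 1 => u ++ wordPow u n

/-!
Reversibility makes each extended transition function `δ_i` injective on words, so it permutes
every (finite) connected component of `A^n`.

Let `y ≠ z`, `δ_i(y) = δ_{i'}(z)`, `ρ_y(i) = ρ_z(i')` witness that the component of `x` in `A`
is not coreversible. Reading a word that leads `x` to `y` leads `x·v` to some word `y·p`; then
`δ_{i'}(z·p) = δ_i(y·p)` lies in the component of `x·v`, which `δ_{i'}` permutes, so `z·p` lies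
in it too, and `y·p`, `z·p` witness that this component is not coreversible.
-/

section Orbit

variable {S Γ : Type*} (d : Γ → S → S)

lemma applyWord_append (s t : List Γ) (x : S) :
    applyWord d (s ++ t) x = applyWord d t (applyWord d s x) := by
  induction s generalizing x with
  | nil => rfl
  | cons i s ih => exact ih (d i x)

lemma mapsTo_orbitOf (x : S) (i : Γ) : Set.MapsTo (d i) (orbitOf d x) (orbitOf d x) := by
  rintro y ⟨s, rfl⟩
  exact ⟨s ++ [i], applyWord_append d s [i] x⟩

variable {d}

lemma compReversible_orbitOf {x : S} (hinj : ∀ i, Function.Injective (d i))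
    (hfin : (orbitOf d x).Finite) : CompReversible d (orbitOf d x) :=
  fun i => (hfin.injOn_iff_bijOn_of_mapsTo (mapsTo_orbitOf d x i)).mp (hinj i).injOn

lemma CompReversible.mem_of_apply_eq_apply {C : Set S} (hC : CompReversible d C) {i i' : Γ}
    (hinj : Function.Injective (d i')) {y z : S} (hy : y ∈ C) (h : d i y = d i' z) : z ∈ C := by
  obtain ⟨w, hw, hwz⟩ := (hC i').surjOn ((hC i).mapsTo hy)
  rwa [hinj (hwz.trans h)] at hw

end Orbit

section Power

variable {Q Γ : Type*} {δ : Γ → Q → Q} {ρ : Q → Γ → Γ}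

lemma length_deltaStar (i : Γ) (u : List Q) : (deltaStar δ ρ i u).length = u.length := by
  induction u generalizing i with
  | nil => rfl
  | cons x u ih => simp [deltaStar, ih]

lemma length_applyWord_deltaStar (s : List Γ) (u : List Q) :
    (applyWord (deltaStar δ ρ) s u).length = u.length := by
  induction s generalizing u with
  | nil => rfl
  | cons i s ih => exact (ih _).trans (length_deltaStar i u)

lemma finite_orbitOf_deltaStar [Finite Q] (u : List Q) : (orbitOf (deltaStar δ ρ) u).Finite :=
  (List.finite_length_eq Q u.length).subset fun _ ⟨s, hs⟩ => hs ▸ length_applyWord_deltaStar s u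

lemma applyWord_deltaStar_cons (s : List Γ) (x : Q) (v : List Q) :
    applyWord (deltaStar δ ρ) s (x :: v)
      = applyWord δ s x :: applyWord (deltaStar δ ρ) (rhoStar δ ρ x s) v := by
  induction s generalizing x v with
  | nil => rfl
  | cons i s ih => exact ih (δ i x) (deltaStar δ ρ (ρ x i) v)

lemma deltaStar_injective (hRev : MReversible δ) (i : Γ) :
    Function.Injective (deltaStar δ ρ i) := by
  intro u u' h
  induction u generalizing i u' with
  | nil => cases u' <;> simp_all [deltaStar]
  | cons x u ih =>
    cases u' with
    | nil => simp [deltaStar] at h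
    | cons x' u' =>
      obtain ⟨hx, hu⟩ := List.cons.inj h
      obtain rfl := (hRev i).injective hx
      rw [ih _ hu]

lemma compReversible_orbitOf_deltaStar [Finite Q] (hRev : MReversible δ) (u : List Q) :
    CompReversible (deltaStar δ ρ) (orbitOf (deltaStar δ ρ) u) :=
  compReversible_orbitOf (deltaStar_injective hRev) (finite_orbitOf_deltaStar u)

lemma not_compCoreversible_orbitOf_deltaStar_cons [Finite Q] (hRev : MReversible δ) {x : Q}
    (hx : ¬ CompCoreversible δ ρ (orbitOf δ x)) (v : List Q) :
    ¬ CompCoreversible (deltaStar δ ρ) (rhoLetter ρ) (orbitOf (deltaStar δ ρ) (x :: v)) := by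
  intro hcor
  simp only [CompCoreversible, not_forall] at hx
  obtain ⟨y, ⟨a, rfl⟩, z, -, i, i', hδ, hρ, hyz⟩ := hx
  set p := applyWord (deltaStar δ ρ) (rhoStar δ ρ x a) v
  have hy : applyWord δ a x :: p ∈ orbitOf (deltaStar δ ρ) (x :: v) :=
    ⟨a, applyWord_deltaStar_cons a x v⟩
  have hδp : deltaStar δ ρ i (applyWord δ a x :: p) = deltaStar δ ρ i' (z :: p) := by
    simp only [deltaStar, hδ, hρ]
  have hz : z :: p ∈ orbitOf (deltaStar δ ρ) (x :: v) :=
    (compReversible_orbitOf_deltaStar hRev _).mem_of_apply_eq_apply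
      (deltaStar_injective hRev i') hy hδp
  have hρp : rhoLetter ρ (applyWord δ a x :: p) i = rhoLetter ρ (z :: p) i' := by
    simp only [rhoLetter, hρ]
  exact hyz (List.cons.inj (hcor _ hy _ hz i i' hδp hρp)).1

lemma rhoLetter_bijective (hInv : MInvertible ρ) (u : List Q) :
    Function.Bijective (rhoLetter ρ u) := by
  induction u with
  | nil => exact Function.bijective_id
  | cons x u ih => exact ih.comp (hInv x)

end Power

theorem power_component_reversible_noncoreversible_general
    {Q Γ : Type*} [Fintype Q]
    (δ : Γ → Q → Q) (ρ : Q → Γ → Γ)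
    (hRev : MReversible δ)
    (hNoCor : ∀ x : Q, ¬ CompCoreversible δ ρ (orbitOf δ x)) :
    ∀ n : ℕ, 1 ≤ n → ∀ u : List Q, u.length = n →
      (CompReversible (deltaStar δ ρ) (orbitOf (deltaStar δ ρ) u) ∧
        ¬ CompCoreversible (deltaStar δ ρ) (rhoLetter ρ) (orbitOf (deltaStar δ ρ) u)) ∧
      (MInvertible ρ → CompInvertible (rhoLetter ρ) (orbitOf (deltaStar δ ρ) u)) := by
  intro n hn u hu
  obtain ⟨x, v, rfl⟩ := List.exists_cons_of_length_pos (hu ▸ hn : 0 < u.length)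
  exact ⟨⟨compReversible_orbitOf_deltaStar hRev _,
      not_compCoreversible_orbitOf_deltaStar_cons hRev (hNoCor x) v⟩,
    fun hInv w _ => rhoLetter_bijective hInv w⟩

/-- If a Mealy automaton is reversible and none of its
connected components is coreversible, then for every `n ≥ 1` every connected
component of the power `A^n` is reversible and non-coreversible; if moreover
the automaton is invertible, then these components are also invertible. -/
theorem power_component_reversible_noncoreversible
    {Q Γ : Type*} [Fintype Q] [Fintype Γ] [Nonempty Q] [Nonempty Γ]
    (δ : Γ → Q → Q) (ρ : Q → Γ → Γ)
    (hRev : MReversible δ)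
    (hNoCor : ∀ x : Q, ¬ CompCoreversible δ ρ (orbitOf δ x)) :
    ∀ n : ℕ, 1 ≤ n → ∀ u : List Q, u.length = n →
      (CompReversible (deltaStar δ ρ) (orbitOf (deltaStar δ ρ) u) ∧
        ¬ CompCoreversible (deltaStar δ ρ) (rhoLetter ρ) (orbitOf (deltaStar δ ρ) u)) ∧
      (MInvertible ρ → CompInvertible (rhoLetter ρ) (orbitOf (deltaStar δ ρ) u)) :=
  power_component_reversible_noncoreversible_general δ ρ hRev hNoCor
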